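/- arXiv:1101.2754 — 2 statements merged into one kernel-verified Lean document; each statement's English description precedes it below -/
import Mathlib

section
/- Let G be a group, S a T_s-set of sequences in G, H a closed normal subgroup of (G, τ_S), and π : G → G/H the quotient homomorphism. Then π(S) := {(π(u_n)) : (u_n) ∈ S} is a T_s-set of sequences in G/H, and the quotient topology on G/H coincides with τ_{π(S)}. In particular, a Hausdorff quotient of an s-group is an s-group. -/
open Filter Topology Pointwise

/-- `u` converges to the identity in the group topology `t`. -/
def TendstoOne {G : Type*} [Group G] (t : GroupTopology G) (u : ℕ → G) : Prop :=
  Filter.Tendsto u Filter.atTop (@nhds G t.toTopologicalSpace 1)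

/-- The group topology `t` is Hausdorff. -/
def IsHausdorffGT {G : Type*} [Group G] (t : GroupTopology G) : Prop :=
  @T2Space G t.toTopologicalSpace

/-- `S` is a `T_s`-set of sequences: some Hausdorff group topology makes every
sequence of `S` converge to the identity. -/
def IsTsSet {G : Type*} [Group G] (S : Set (ℕ → G)) : Prop :=
  ∃ t : GroupTopology G, IsHausdorffGT t ∧ ∀ u ∈ S, TendstoOne t u

/-- `τ` is the finest Hausdorff group topology on `G` in which every sequence of `S`
converges to the identity (recall that in Mathlib's order on topologies, finer = smaller). -/
def IsTauS {G : Type*} [Group G] (S : Set (ℕ → G)) (τ : GroupTopology G) : Prop :=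
  IsHausdorffGT τ ∧ (∀ u ∈ S, TendstoOne τ u) ∧
    ∀ t : GroupTopology G, IsHausdorffGT t → (∀ u ∈ S, TendstoOne t u) → τ ≤ t

/-- The given topological-group structure on `G`, as a term of `GroupTopology G`. -/
def ambientGT (G : Type*) [Group G] [τ : TopologicalSpace G] [h : IsTopologicalGroup G] :
    GroupTopology G := ⟨τ, h⟩

/-- The set of all sequences converging to the identity in a group topology. -/
def SeqConvOne {G : Type*} [Group G] (t : GroupTopology G) : Set (ℕ → G) :=
  {u | TendstoOne t u}

/-- `(G, τ)` is an `s`-group: its topology is the finest Hausdorff group topology in which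
every member of some `T_s`-set of sequences converges to the identity. -/
def IsSGroup (G : Type*) [Group G] [TopologicalSpace G] [IsTopologicalGroup G] [T2Space G] :
    Prop :=
  ∃ S : Set (ℕ → G), IsTauS S (ambientGT G)

/-!
The quotient map is continuous, so every sequence of `π(S)` tends to `1` in the quotient
topology, which is Hausdorff because `H` is closed. For minimality, pull a competing group
topology `t` on `G ⧸ H` back along `π`: every sequence of `S` tends to `1` there, so `τ_S` is
finer than the pullback, which by adjunction says that the quotient topology is finer than `t`.
-/

namespace GroupTopology

variable {G K : Type*} [Group G] [Group K]

def comap (f : G →* K) (t : GroupTopology K) : GroupTopology G :=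
  letI := t.toTopologicalSpace
  haveI := t.toIsTopologicalGroup
  ⟨t.toTopologicalSpace.induced f, topologicalGroup_induced f⟩

theorem le_comap_iff (f : G →* K) (s : GroupTopology G) (t : GroupTopology K) :
    s ≤ t.comap f ↔ s.toTopologicalSpace.coinduced f ≤ t.toTopologicalSpace :=
  coinduced_le_iff_le_induced.symm

end GroupTopology

section TendstoOne

variable {G K : Type*} [Group G] [Group K]

theorem TendstoOne.map {s : GroupTopology G} {t : GroupTopology K} (f : G →* K)
    (hf : Continuous[s.toTopologicalSpace, t.toTopologicalSpace] f) {u : ℕ → G}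
    (hu : TendstoOne s u) : TendstoOne t (f ∘ u) := by
  unfold TendstoOne at hu ⊢
  rw [← map_one f]
  exact (@Continuous.tendsto _ _ s.toTopologicalSpace t.toTopologicalSpace _ hf 1).comp hu

theorem tendstoOne_comap_iff (f : G →* K) (t : GroupTopology K) (u : ℕ → G) :
    TendstoOne (t.comap f) u ↔ TendstoOne t (f ∘ u) := by
  let := t.toTopologicalSpace
  show Tendsto u atTop (@nhds G (.induced f _) 1) ↔ Tendsto (f ∘ u) atTop (𝓝 1)
  rw [nhds_induced, map_one, tendsto_comap_iff]

theorem tendstoOne_inf_iff (s t : GroupTopology G) (u : ℕ → G) :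
    TendstoOne (s ⊓ t) u ↔ TendstoOne s u ∧ TendstoOne t u := by
  unfold TendstoOne
  rw [GroupTopology.toTopologicalSpace_inf, nhds_inf, tendsto_inf]

end TendstoOne

section TauS

variable {G K : Type*} [Group G] [Group K] {S : Set (ℕ → G)} {τ : GroupTopology G}

/-- The competitor `t` need not be Hausdorff: `τ ⊓ t` is, being finer than `τ`. -/
theorem IsTauS.le_of_forall_tendstoOne (hτ : IsTauS S τ) {t : GroupTopology G}
    (ht : ∀ u ∈ S, TendstoOne t u) : τ ≤ t := by
  obtain ⟨hT2, hconv, hmin⟩ := hτ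
  have hT2_inf : IsHausdorffGT (τ ⊓ t) :=
    t2Space_antitone (GroupTopology.toTopologicalSpace_le.2 inf_le_left) hT2
  have hconv_inf : ∀ u ∈ S, TendstoOne (τ ⊓ t) u := fun u hu =>
    (tendstoOne_inf_iff τ t u).2 ⟨hconv u hu, ht u hu⟩
  exact (hmin _ hT2_inf hconv_inf).trans inf_le_right

theorem IsTauS.image (hτ : IsTauS S τ) (f : G →* K) (τK : GroupTopology K)
    (hτK : τK.toTopologicalSpace = τ.toTopologicalSpace.coinduced f)
    (hT2 : IsHausdorffGT τK) : IsTauS ((f ∘ ·) '' S) τK := by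
  have hf : Continuous[τ.toTopologicalSpace, τK.toTopologicalSpace] f := by
    rw [hτK]
    exact continuous_coinduced_rng
  refine ⟨hT2, ?_, fun t _ ht => ?_⟩
  · rintro _ ⟨u, hu, rfl⟩
    exact (hτ.2.1 u hu).map f hf
  · have hτ_le : τ ≤ t.comap f := hτ.le_of_forall_tendstoOne fun u hu =>
      (tendstoOne_comap_iff f t u).2 (ht _ ⟨u, hu, rfl⟩)
    rw [← GroupTopology.toTopologicalSpace_le, hτK]
    exact (GroupTopology.le_comap_iff f τ t).1 hτ_le

end TauS

theorem isHausdorffGT_quotient {G : Type*} [Group G] (τ : GroupTopology G) (H : Subgroup G)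
    [H.Normal] (hH : IsClosed[τ.toTopologicalSpace] (H : Set G)) (τQ : GroupTopology (G ⧸ H))
    (hτQ : τQ.toTopologicalSpace =
      TopologicalSpace.coinduced (QuotientGroup.mk : G → G ⧸ H) τ.toTopologicalSpace) :
    IsHausdorffGT τQ := by
  let := τ.toTopologicalSpace
  have := τ.toIsTopologicalGroup
  have : IsClosed (H : Set G) := hH
  rw [IsHausdorffGT, show τQ.toTopologicalSpace = QuotientGroup.instTopologicalSpace H from hτQ]
  infer_instance

/-- if `S` is a `T_s`-set in `G` with finest topology `τ_S`, `H` is a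
`τ_S`-closed normal subgroup and `τ_Q` is the quotient topology on `G ⧸ H` (a group
topology), then the image `π(S)` of `S` under the quotient map is a `T_s`-set in `G ⧸ H`
and `τ_Q` is the finest Hausdorff group topology in which all sequences of `π(S)` converge
to the identity. -/
theorem stmt7 {G : Type*} [Group G] (S : Set (ℕ → G)) (τS : GroupTopology G)
    (hτS : IsTauS S τS) (H : Subgroup G) [H.Normal]
    (hH : @IsClosed G τS.toTopologicalSpace (H : Set G))
    (τQ : GroupTopology (G ⧸ H))
    (hτQ : τQ.toTopologicalSpace =
      TopologicalSpace.coinduced (QuotientGroup.mk : G → G ⧸ H) τS.toTopologicalSpace) :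
    IsTsSet ((fun u => (QuotientGroup.mk : G → G ⧸ H) ∘ u) '' S) ∧
      IsTauS ((fun u => (QuotientGroup.mk : G → G ⧸ H) ∘ u) '' S) τQ := by
  have hT2 : IsHausdorffGT τQ := isHausdorffGT_quotient τS H hH τQ hτQ
  have hτQ_min : IsTauS ((QuotientGroup.mk' H ∘ ·) '' S) τQ :=
    hτS.image (QuotientGroup.mk' H) τQ hτQ hT2
  exact ⟨⟨τQ, hT2, hτQ_min.2.1⟩, hτQ_min⟩
end

section
/- Let u and v be T-sequences in groups G and H respectively. Define the sequence d in G × H by d_{2n+1} = (u_n, e_H) and d_{2n} = (e_G, v_n). Then d is a T-sequence in G × H and τ_d = τ_u × τ_v, i.e., the finest Hausdorff group topology on G × H in which d converges to the identity is the product of the finest topologies for u and v. -/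
open Filter Topology Pointwise

/-!
`d` converges to `1` in a group topology `t` on `G × H` iff `(u n, 1) → 1` and
`(1, v n) → 1`, i.e. iff `u → 1` and `v → 1` in the topologies that `t` induces on the factors
`G × 1` and `1 × H`. These induced topologies are Hausdorff group topologies when `t` is, so they
are coarser than `τ_u` and `τ_v`; thus both inclusions are continuous from `τ_u × τ_v` into `t`,
and hence so is `(g, h) ↦ (g, 1) * (1, h)`, the identity.
-/

section Interleave

variable {α : Type*} {l : Filter α} {d : ℕ → α}

theorem Filter.Tendsto.comp_two_mul (hd : Tendsto d atTop l) :
    Tendsto (fun n => d (2 * n)) atTop l :=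
  hd.comp (StrictMono.tendsto_atTop fun _ _ h => by omega)

theorem Filter.Tendsto.comp_two_mul_add_one (hd : Tendsto d atTop l) :
    Tendsto (fun n => d (2 * n + 1)) atTop l :=
  hd.comp (StrictMono.tendsto_atTop fun _ _ h => by omega)

theorem Filter.tendsto_of_tendsto_two_mul_of_tendsto_two_mul_add_one
    (heven : Tendsto (fun n => d (2 * n)) atTop l)
    (hodd : Tendsto (fun n => d (2 * n + 1)) atTop l) :
    Tendsto d atTop l := by
  intro s hs
  obtain ⟨N, hN⟩ := eventually_atTop.1 (heven hs)
  obtain ⟨M, hM⟩ := eventually_atTop.1 (hodd hs)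
  refine eventually_atTop.2 ⟨2 * max N M + 1, fun n hn => ?_⟩
  obtain ⟨k, rfl | rfl⟩ := Nat.even_or_odd' n
  · exact hN k (by omega)
  · exact hM k (by omega)

end Interleave

namespace GroupTopology

variable {G H : Type*} [Group G] [Group H]

def induced (f : G →* H) (t : GroupTopology H) : GroupTopology G :=
  ⟨t.toTopologicalSpace.induced f, @topologicalGroup_induced _ _ t.toTopologicalSpace _
    t.toIsTopologicalGroup _ _ _ _ f⟩

theorem isHausdorffGT_induced {f : G →* H} (hf : Function.Injective f) {t : GroupTopology H}
    (ht : IsHausdorffGT t) : IsHausdorffGT (t.induced f) :=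
  letI := t.toTopologicalSpace
  letI := t.toTopologicalSpace.induced f
  have : T2Space H := ht
  Topology.IsEmbedding.t2Space (f := f) ⟨⟨rfl⟩, hf⟩

theorem tendstoOne_induced_iff {f : G →* H} {t : GroupTopology H} {u : ℕ → G} :
    TendstoOne (t.induced f) u ↔ TendstoOne t (f ∘ u) := by
  rw [TendstoOne, induced, @nhds_induced _ _ t.toTopologicalSpace, map_one, tendsto_comap_iff]
  rfl

theorem le_induced_iff {f : G →* H} {t : GroupTopology H} {τ : GroupTopology G} :
    τ ≤ t.induced f ↔ Continuous[τ.toTopologicalSpace, t.toTopologicalSpace] f :=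
  toTopologicalSpace_le.symm.trans continuous_iff_le_induced.symm

theorem prod_le_of_continuous_inl_inr [TopologicalSpace G] [TopologicalSpace H]
    {t : GroupTopology (G × H)}
    (hinl : Continuous[_, t.toTopologicalSpace] (MonoidHom.inl G H))
    (hinr : Continuous[_, t.toTopologicalSpace] (MonoidHom.inr G H)) :
    instTopologicalSpaceProd ≤ t.toTopologicalSpace := by
  rw [← continuous_id_iff_le]
  -- `id = inl ∘ fst * inr ∘ snd`
  have hmul : Continuous[instTopologicalSpaceProd, t.toTopologicalSpace]
      fun p : G × H => MonoidHom.inl G H p.1 * MonoidHom.inr G H p.2 :=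
    @Continuous.mul _ t.toTopologicalSpace _ t.toIsTopologicalGroup.toContinuousMul _ _ _ _
      (@Continuous.comp _ _ _ _ _ t.toTopologicalSpace _ _ hinl continuous_fst)
      (@Continuous.comp _ _ _ _ _ t.toTopologicalSpace _ _ hinr continuous_snd)
  convert hmul
  simp

end GroupTopology

section TSequence

variable {G H : Type*} [Group G] [Group H]

theorem TendstoOne.mono {τ t : GroupTopology G} {u : ℕ → G} (hu : TendstoOne τ u) (h : τ ≤ t) :
    TendstoOne t u :=
  hu.mono_right (nhds_mono (GroupTopology.toTopologicalSpace_le.2 h))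

theorem IsTauS.le_of_tendstoOne {u : ℕ → G} {τ t : GroupTopology G} (hτ : IsTauS {u} τ)
    (ht : IsHausdorffGT t) (hu : TendstoOne t u) : τ ≤ t :=
  hτ.2.2 t ht fun _ hw => hw ▸ hu

theorem tendstoOne_interleave_iff {u : ℕ → G} {v : ℕ → H} {d : ℕ → G × H}
    (hd : ∀ n : ℕ, d (2 * n + 1) = (u n, 1) ∧ d (2 * n) = (1, v n))
    {t : GroupTopology (G × H)} :
    TendstoOne t d ↔ TendstoOne (t.induced (MonoidHom.inl G H)) u ∧
      TendstoOne (t.induced (MonoidHom.inr G H)) v := by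
  have hodd : (fun n => d (2 * n + 1)) = MonoidHom.inl G H ∘ u := funext fun n => (hd n).1
  have heven : (fun n => d (2 * n)) = MonoidHom.inr G H ∘ v := funext fun n => (hd n).2
  rw [GroupTopology.tendstoOne_induced_iff, GroupTopology.tendstoOne_induced_iff, ← hodd, ← heven]
  exact ⟨fun h => ⟨h.comp_two_mul_add_one, h.comp_two_mul⟩,
    fun h => tendsto_of_tendsto_two_mul_of_tendsto_two_mul_add_one h.2 h.1⟩

end TSequence

/-- if `u` and `v` are `T`-sequences in `G` and `H` with finest topologies
`τ_u` and `τ_v`, then the interleaved sequence `d` in `G × H` with `d (2n+1) = (u n, 1)` and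
`d (2n) = (1, v n)` is a `T`-sequence, and `τ_d = τ_u × τ_v`: the product topology is the
finest Hausdorff group topology on `G × H` in which `d` converges to the identity. -/
theorem stmt16 {G H : Type*} [Group G] [Group H]
    (u : ℕ → G) (v : ℕ → H) (τu : GroupTopology G) (τv : GroupTopology H)
    (hu : IsTauS {u} τu) (hv : IsTauS {v} τv)
    (d : ℕ → G × H)
    (hd : ∀ n : ℕ, d (2 * n + 1) = (u n, 1) ∧ d (2 * n) = (1, v n))
    (τp : GroupTopology (G × H))
    (hτp : τp.toTopologicalSpace =
      @instTopologicalSpaceProd G H τu.toTopologicalSpace τv.toTopologicalSpace) :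
    IsTsSet {d} ∧ IsTauS {d} τp := by
  let _ : TopologicalSpace G := τu.toTopologicalSpace
  let _ : TopologicalSpace H := τv.toTopologicalSpace
  have hτpT2 : IsHausdorffGT τp := by
    have : T2Space G := hu.1
    have : T2Space H := hv.1
    unfold IsHausdorffGT
    rw [hτp]
    infer_instance
  have hdτp : TendstoOne τp d := by
    refine (tendstoOne_interleave_iff hd).2 ⟨(hu.2.1 u rfl).mono ?_, (hv.2.1 v rfl).mono ?_⟩
    · exact GroupTopology.le_induced_iff.2 (hτp ▸ continuous_id.prodMk continuous_const)
    · exact GroupTopology.le_induced_iff.2 (hτp ▸ continuous_const.prodMk continuous_id)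
  have hτp_le : ∀ t : GroupTopology (G × H), IsHausdorffGT t → TendstoOne t d → τp ≤ t := by
    intro t ht hdt
    obtain ⟨hut, hvt⟩ := (tendstoOne_interleave_iff hd).1 hdt
    have hinl := hu.le_of_tendstoOne
      (GroupTopology.isHausdorffGT_induced (Prod.mk_left_injective 1) ht) hut
    have hinr := hv.le_of_tendstoOne
      (GroupTopology.isHausdorffGT_induced (Prod.mk_right_injective 1) ht) hvt
    rw [← GroupTopology.toTopologicalSpace_le, hτp]
    exact GroupTopology.prod_le_of_continuous_inl_inr (GroupTopology.le_induced_iff.1 hinl)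
      (GroupTopology.le_induced_iff.1 hinr)
  have hd_tendsto : ∀ w ∈ ({d} : Set (ℕ → G × H)), TendstoOne τp w := fun _ hw => hw ▸ hdτp
  exact ⟨⟨τp, hτpT2, hd_tendsto⟩, hτpT2, hd_tendsto, fun t ht hdt => hτp_le t ht (hdt d rfl)⟩
end
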